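/- For 0 ≤ k ≤ n-3, any two collections labeled by suffixes of the form s_{n,k+1}s_{n-1,j₂}s_{n,j₃}⋯s_{n-1+[ℓ]₂,j_ℓ} with ℓ ≥ 2 (i.e., first segment descending to k+1 and at least two segments) have exactly the same set of prefixes, and in particular the same number of elements. -/

import Mathlib

/-- Letters `i` and `j` (from `{1, …, n}`) are neighbors in the `Dₙ` Dynkin diagram:
`1 – 2 – ⋯ – (n-2)` is a path, and both `n-1` and `n` are adjacent to `n-2`. -/
def dnAdj (n i j : ℕ) : Prop :=
  (i + 1 = j ∧ j ≤ n - 1) ∨ (j + 1 = i ∧ i ≤ n - 1) ∨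
  (i = n ∧ j = n - 2) ∨ (j = n ∧ i = n - 2)

/-- A word `w` is homogeneous (with respect to a neighbor relation `adj`): whenever the same
letter appears in positions `r < s`, there are positions `t, u` with `r < t < u < s` whose
letters are both neighbors of that letter. -/
def Homog {α : Type*} (adj : α → α → Prop) (w : List α) : Prop :=
  ∀ r s : Fin w.length, (r : ℕ) < s → w.get r = w.get s →
    ∃ t u : Fin w.length, (r : ℕ) < t ∧ (t : ℕ) < u ∧ (u : ℕ) < s ∧
      adj (w.get r) (w.get t) ∧ adj (w.get r) (w.get u)

/-- The descending word `[a, a-1, …, b]` (empty if `a < b`). -/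
def desc (a b : ℕ) : List ℕ := (List.range (a + 1 - b)).map (fun t => a - t)

/-- The suffix word `s_{n,j₁} s_{n-1,j₂} s_{n,j₃} ⋯` of type `Dₙ` determined by the indices
`j₁ < j₂ < ⋯ < j_ℓ`; the boolean records whether the next segment starts with `n` (`true`)
or with `n-1` (`false`). -/
def suffixWord (n : ℕ) : Bool → List ℕ → List ℕ
  | _, [] => []
  | b, j :: js => ((if b then n else n - 1) :: desc (n - 2) j) ++ suffixWord n (!b) js

/-- Validity of the indices `j₁ < j₂ < ⋯ < j_ℓ` of a suffix: strictly increasing and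
contained in `{1, …, n-1}`. -/
def ValidSuffixIdx (n : ℕ) (js : List ℕ) : Prop :=
  js.Chain' (· < ·) ∧ ∀ j ∈ js, 1 ≤ j ∧ j ≤ n - 1

/-- The prefix word `s_{1,i₁} s_{2,i₂} ⋯ s_{n-1,i_{n-1}}` where `s_{k,i} = [k, k-1, …, i]`. -/
def prefixWord (n : ℕ) (i : ℕ → ℕ) : List ℕ :=
  (List.range (n - 1)).flatMap (fun k => desc (k + 1) (i (k + 1)))

/-- Validity of the indices of a prefix: `1 ≤ i_k ≤ k + 1` for `1 ≤ k ≤ n-1`. -/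
def ValidPrefixIdx (n : ℕ) (i : ℕ → ℕ) : Prop :=
  ∀ k, 1 ≤ k → k ≤ n - 1 → 1 ≤ i k ∧ i k ≤ k + 1

/-- The collection labeled by a suffix `suf`: all homogeneous canonical words of type `Dₙ`
with suffix `suf`. -/
def collection (n : ℕ) (suf : List ℕ) : Set (List ℕ) :=
  {w | ∃ i, ValidPrefixIdx n i ∧ w = prefixWord n i ++ suf ∧ Homog (dnAdj n) w}

/-- The set of prefixes appearing in the collection labeled by a suffix `suf`. -/
def prefixSet (n : ℕ) (suf : List ℕ) : Set (List ℕ) :=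
  {p | ∃ i, ValidPrefixIdx n i ∧ p = prefixWord n i ∧ Homog (dnAdj n) (p ++ suf)}

/-!
Homogeneity splits along a concatenation: `A ++ B` is homogeneous iff `A` and `B` are and every
letter occurring in both has two neighbours between an occurrence in `A` and a later one in `B`.
With this, every suffix word is homogeneous on its own, segment by segment. All suffixes of the
theorem start with the same word `C = n (n-2) ⋯ (k+1) (n-1)`, which contains every letter of
`[k+1, n-1]`. Prefix letters are at most `n-1` and the later suffix letters at least `k+1`, so a
prefix letter that reappears after `C` already occurs in `C`, and `p ++ suffix` is homogeneous iff
`p ++ C` is.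
-/

section Homog

variable {α : Type*} {adj : α → α → Prop}

def TwoNeighborsIn (adj : α → α → Prop) (x : α) (m : List α) : Prop :=
  ∃ m₁ m₂, m = m₁ ++ m₂ ∧ (∃ y ∈ m₁, adj x y) ∧ ∃ z ∈ m₂, adj x z

lemma twoNeighborsIn_iff {x : α} {m : List α} :
    TwoNeighborsIn adj x m ↔
      ∃ (i j : ℕ) (_ : i < j) (hj : j < m.length), adj x m[i] ∧ adj x m[j] := by
  constructor
  · rintro ⟨m₁, m₂, rfl, ⟨y, hy, hxy⟩, ⟨z, hz, hxz⟩⟩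
    obtain ⟨i, hi, rfl⟩ := List.getElem_of_mem hy
    obtain ⟨j, hj, rfl⟩ := List.getElem_of_mem hz
    refine ⟨i, m₁.length + j, by omega, by simp; omega, ?_, ?_⟩
    · rwa [List.getElem_append_left]
    · simpa using hxz
  · rintro ⟨i, j, hij, hj, hi', hj'⟩
    refine ⟨m.take j, m.drop j, (List.take_append_drop j m).symm,
      ⟨m[i], ?_, hi'⟩, ⟨m[j], ?_, hj'⟩⟩
    · exact List.mem_iff_getElem.2 ⟨i, by simp; omega, by simp⟩
    · exact List.mem_iff_getElem.2 ⟨0, by simp; omega, by simp⟩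

lemma TwoNeighborsIn.mono {x : α} {m m' : List α} (h : TwoNeighborsIn adj x m)
    (hm : m <:+: m') : TwoNeighborsIn adj x m' := by
  obtain ⟨m₁, m₂, rfl, ⟨y, hy, hxy⟩, ⟨z, hz, hxz⟩⟩ := h
  obtain ⟨a, b, rfl⟩ := hm
  exact ⟨a ++ m₁, m₂ ++ b, by simp, ⟨y, by simp [hy], hxy⟩, ⟨z, by simp [hz], hxz⟩⟩

lemma List.eq_take_append_getElem_cons {w : List α} {r s : ℕ} (hrs : r < s)
    (hs : s < w.length) :
    w = w.take r ++ w[r] :: ((w.drop (r + 1)).take (s - r - 1) ++ w[s] :: w.drop (s + 1)) := by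
  have hdrop : w.drop s = (w.drop (r + 1)).drop (s - r - 1) := by
    rw [List.drop_drop]; congr 1; omega
  rw [← List.drop_eq_getElem_cons, hdrop, List.take_append_drop, ← List.drop_eq_getElem_cons,
    List.take_append_drop]

lemma List.getElem_append_cons_append_cons (l₁ m l₂ : List α) (x : α) (v : ℕ)
    (hv : v < (l₁ ++ x :: (m ++ x :: l₂)).length) (h₁ : l₁.length < v)
    (h₂ : v < l₁.length + 1 + m.length) :
    (l₁ ++ x :: (m ++ x :: l₂))[v] = m[v - l₁.length - 1] := by
  rw [List.getElem_append_right (by omega), List.getElem_cons, dif_neg (by omega),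
    List.getElem_append_left]

theorem homog_iff {w : List α} :
    Homog adj w ↔ ∀ l₁ x m l₂, w = l₁ ++ x :: (m ++ x :: l₂) → TwoNeighborsIn adj x m := by
  constructor
  · rintro h l₁ x m l₂ rfl
    have hx₁ : (l₁ ++ x :: (m ++ x :: l₂))[l₁.length]'(by simp) = x := by simp
    have hx₂ :
        (l₁ ++ x :: (m ++ x :: l₂))[l₁.length + 1 + m.length]'(by simp; omega) = x := by
      rw [List.getElem_append_right (by omega), List.getElem_cons, dif_neg (by omega),
        List.getElem_append_right (by omega), List.getElem_cons, dif_pos (by omega)]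
    obtain ⟨t, u, hrt, htu, hus, ht, hu⟩ :=
      h ⟨l₁.length, by simp⟩ ⟨l₁.length + 1 + m.length, by simp; omega⟩
        (by simp only; omega) (by simp only [List.get_eq_getElem, hx₁, hx₂])
    simp only [List.get_eq_getElem, hx₁] at hrt htu hus ht hu
    rw [List.getElem_append_cons_append_cons _ _ _ _ _ _ hrt (by omega)] at ht
    rw [List.getElem_append_cons_append_cons _ _ _ _ _ _ (by omega) hus] at hu
    exact twoNeighborsIn_iff.2 ⟨_, _, by omega, by omega, ht, hu⟩
  · intro h r s hrs hrs'
    simp only [List.get_eq_getElem] at hrs' ⊢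
    have hw := List.eq_take_append_getElem_cons hrs s.isLt
    rw [← hrs'] at hw
    obtain ⟨i, j, hij, hj, hi', hj'⟩ := twoNeighborsIn_iff.1 (h _ _ _ _ hw)
    simp only [List.length_take, List.length_drop] at hj
    refine ⟨⟨r + 1 + i, by omega⟩, ⟨r + 1 + j, by omega⟩, by dsimp only; omega,
      by dsimp only; omega, by dsimp only; omega, ?_, ?_⟩
    · simpa [Nat.add_assoc] using hi'
    · simpa [Nat.add_assoc] using hj'

theorem homog_append_iff {A B : List α} :
    Homog adj (A ++ B) ↔ Homog adj A ∧ Homog adj B ∧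
      ∀ A₁ x A₂ B₁ B₂, A = A₁ ++ x :: A₂ → B = B₁ ++ x :: B₂ →
        TwoNeighborsIn adj x (A₂ ++ B₁) := by
  simp only [homog_iff]
  constructor
  · intro h
    refine ⟨?_, ?_, ?_⟩
    · rintro l₁ x m l₂ rfl
      exact h l₁ x m (l₂ ++ B) (by simp)
    · rintro l₁ x m l₂ rfl
      exact h (A ++ l₁) x m l₂ (by simp)
    · rintro A₁ x A₂ B₁ B₂ rfl rfl
      exact h A₁ x (A₂ ++ B₁) B₂ (by simp)
  · rintro ⟨hA, hB, hAB⟩ l₁ x m l₂ h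
    obtain ⟨a, rfl, rfl⟩ | ⟨c, rfl, hc⟩ := List.append_eq_append_iff.1 h
    · exact hB a x m l₂ rfl
    obtain ⟨rfl, rfl⟩ | ⟨c', rfl, hc'⟩ := List.cons_eq_append_iff.1 hc
    · exact hB [] x m l₂ rfl
    obtain ⟨a, rfl, ha⟩ | ⟨b, rfl, rfl⟩ := List.append_eq_append_iff.1 hc'
    · obtain ⟨rfl, rfl⟩ | ⟨a, rfl, rfl⟩ := List.cons_eq_append_iff.1 ha
      · simpa using hAB l₁ x m [] l₂ (by simp) rfl
      · exact hA l₁ x m a (by simp)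
    · exact hAB l₁ x c' b l₂ rfl rfl

lemma List.prefix_of_append_eq_append_cons {P Q B₁ B₂ : List α} {x : α}
    (h : P ++ Q = B₁ ++ x :: B₂) (hx : x ∉ P) : P <+: B₁ := by
  obtain ⟨a, rfl, -⟩ | ⟨c, rfl, hc⟩ := List.append_eq_append_iff.1 h
  · exact List.prefix_append P a
  obtain ⟨rfl, -⟩ | ⟨c, rfl, -⟩ := List.cons_eq_append_iff.1 hc
  · simp
  · simp at hx

theorem homog_append_append_iff {p C T : List α} (hCT : Homog adj (C ++ T))
    (hpT : ∀ x ∈ p, x ∈ T → x ∈ C) :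
    Homog adj (p ++ C ++ T) ↔ Homog adj (p ++ C) := by
  refine ⟨fun h => (homog_append_iff.1 h).1, fun h => ?_⟩
  obtain ⟨-, hT, hCT⟩ := homog_append_iff.1 hCT
  refine homog_append_iff.2 ⟨h, hT, fun A₁ x A₂ B₁ B₂ hA hB => ?_⟩
  obtain ⟨a, rfl, hC⟩ | ⟨c, rfl, hc⟩ := List.append_eq_append_iff.1 hA
  · exact hCT a x A₂ B₁ B₂ hC hB
  obtain ⟨rfl, hC⟩ | ⟨c, rfl, rfl⟩ := List.cons_eq_append_iff.1 hc
  · exact hCT [] x A₂ B₁ B₂ hC hB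
  obtain ⟨C₁, C₂, rfl⟩ := List.append_of_mem (hpT x (by simp) (by simp [hB]))
  exact (hCT C₁ x C₂ B₁ B₂ rfl hB).mono ⟨c ++ C₁ ++ [x], [], by simp⟩

lemma homog_of_nodup {w : List α} (h : w.Nodup) : Homog adj w :=
  homog_iff.2 fun l₁ x m l₂ hw => by simp [hw, List.nodup_append] at h

end Homog

lemma mem_desc {a b x : ℕ} : x ∈ desc a b ↔ b ≤ x ∧ x ≤ a := by
  simp only [desc, List.mem_map, List.mem_range]
  constructor
  · rintro ⟨t, ht, rfl⟩; omega
  · intro h; exact ⟨a - x, by omega, by omega⟩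

lemma desc_pairwise (a b : ℕ) : (desc a b).Pairwise (· > ·) := by
  simp only [desc, List.pairwise_map]
  exact List.pairwise_lt_range.imp_of_mem fun _ ht hst => by simp at ht; omega

lemma desc_isChain (a b : ℕ) : (desc a b).IsChain (fun y x => y = x + 1) := by
  simp only [desc, List.isChain_map, List.isChain_range]
  intro m hm; omega

lemma mem_head?_desc {a b y : ℕ} (hy : y ∈ (desc a b).head?) : y = a := by
  simp [desc, List.head?_range] at hy
  omega

section SuffixWord

variable {n : ℕ}

lemma suffixWord_cons (b : Bool) (j : ℕ) (js : List ℕ) :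
    suffixWord n b (j :: js) =
      ((if b then n else n - 1) :: desc (n - 2) j) ++ suffixWord n (!b) js :=
  rfl

lemma exists_le_of_mem_suffixWord {b : Bool} {js : List ℕ} (hjs : ∀ j ∈ js, j ≤ n - 1) {x : ℕ}
    (hx : x ∈ suffixWord n b js) : ∃ j ∈ js, j ≤ x := by
  induction js generalizing b with
  | nil => simp [suffixWord] at hx
  | cons j js ih =>
    simp only [suffixWord, List.cons_append, List.mem_cons, List.mem_append] at hx
    rcases hx with rfl | hx | hx
    · exact ⟨j, by simp, by have := hjs j (by simp); split <;> omega⟩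
    · exact ⟨j, by simp, (mem_desc.1 hx).1⟩
    · obtain ⟨j', hj', hj'x⟩ := ih (fun j hj => hjs j (by simp [hj])) hx
      exact ⟨j', by simp [hj'], hj'x⟩

lemma isChain_suffixWord {b : Bool} {js : List ℕ} (hjs : ∀ j ∈ js, 1 ≤ j ∧ j ≤ n - 1) :
    (suffixWord n b js).IsChain (fun y x => x ≤ n - 2 → dnAdj n x y) := by
  induction js generalizing b with
  | nil => simp [suffixWord]
  | cons j js ih =>
    have hj := hjs j (by simp)
    refine List.IsChain.append ?_ (ih fun j hj => hjs j (by simp [hj])) ?_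
    · refine List.isChain_cons.2 ⟨fun y hy _ => ?_, (desc_isChain _ _).imp fun y x h _ => ?_⟩
      · have := mem_head?_desc hy
        have := mem_desc.1 (List.mem_of_mem_head? hy)
        unfold dnAdj; split <;> omega
      · unfold dnAdj; omega
    · intro x _ y hy hy'
      cases js with
      | nil => simp [suffixWord] at hy
      | cons j' js =>
        have := hjs j' (by simp)
        simp only [suffixWord, List.cons_append, List.head?_cons, Option.mem_def,
          Option.some.injEq] at hy
        subst hy; split at hy' <;> omega

lemma twoNeighborsIn_of_segment_head {b : Bool} {j j₂ : ℕ} {js B₁ B₂ : List ℕ}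
    (hsort : (j :: j₂ :: js).Pairwise (· < ·)) (hjs : ∀ j' ∈ j :: j₂ :: js, 1 ≤ j' ∧ j' ≤ n - 1)
    (hB : suffixWord n (!b) (j₂ :: js) = B₁ ++ (if b then n else n - 1) :: B₂) :
    TwoNeighborsIn (dnAdj n) (if b then n else n - 1) (desc (n - 2) j ++ B₁) := by
  have hj₂ := hjs j₂ (by simp)
  set P := (if !b then n else n - 1) :: desc (n - 2) j₂
  have hxP : (if b then n else n - 1) ∉ P := by
    simp only [P, List.mem_cons, mem_desc, not_or]
    cases b <;> simp <;> omega
  have hS : suffixWord n (!b) (j₂ :: js) = P ++ suffixWord n b js := by simp [P, suffixWord]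
  rw [hS] at hB
  have hPB : P <+: B₁ := List.prefix_of_append_eq_append_cons hB hxP
  have hx : (if b then n else n - 1) ∈ suffixWord n b js := by
    have : (if b then n else n - 1) ∈ P ++ suffixWord n b js := by simp [hB]
    simpa [hxP] using this
  obtain ⟨j₃, hj₃, -⟩ := exists_le_of_mem_suffixWord (fun j hj => (hjs j (by simp [hj])).2) hx
  have := List.rel_of_pairwise_cons hsort (List.mem_cons_self (a := j₂))
  have := List.rel_of_pairwise_cons hsort.of_cons hj₃
  have := hjs j₃ (by simp [hj₃])
  refine ⟨_, _, rfl, ⟨n - 2, mem_desc.2 (by omega), ?_⟩, ⟨n - 2, hPB.subset ?_, ?_⟩⟩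
  · unfold dnAdj; split <;> omega
  · simp only [P, List.mem_cons, mem_desc]; omega
  · unfold dnAdj; split <;> omega

-- The two neighbours are `x - 1`, next in the descending segment, and the letter just before the
-- second occurrence of `x`.
lemma twoNeighborsIn_of_segment_interior {b : Bool} {j x : ℕ} {js A₁ A₂ B₁ B₂ : List ℕ}
    (hsort : (j :: js).Pairwise (· < ·)) (hjs : ∀ j' ∈ j :: js, 1 ≤ j' ∧ j' ≤ n - 1)
    (hA : desc (n - 2) j = A₁ ++ x :: A₂) (hB : suffixWord n b js = B₁ ++ x :: B₂) :
    TwoNeighborsIn (dnAdj n) x (A₂ ++ B₁) := by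
  have hjs' : ∀ j' ∈ js, 1 ≤ j' ∧ j' ≤ n - 1 := fun j' hj' => hjs j' (by simp [hj'])
  have hxD := mem_desc.1 (show x ∈ desc (n - 2) j by simp [hA])
  obtain ⟨j', hj', hj'x⟩ := exists_le_of_mem_suffixWord (fun j hj => (hjs' j hj).2)
    (show x ∈ suffixWord n b js by simp [hB])
  have := List.rel_of_pairwise_cons hsort hj'
  have := hjs' j' hj'
  have hpred : x - 1 ∈ A₂ := by
    have hmem : x - 1 ∈ A₁ ++ x :: A₂ := hA ▸ mem_desc.2 (by omega)
    have hgt := desc_pairwise (n - 2) j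
    rw [hA, List.pairwise_append] at hgt
    rcases List.mem_append.1 hmem with h | h
    · have := hgt.2.2 _ h x (by simp); omega
    · simpa [show x - 1 ≠ x by omega] using h
  obtain rfl | ⟨L, z, rfl⟩ := List.eq_nil_or_concat B₁
  · cases js with
    | nil => simp at hj'
    | cons j₂ js =>
      simp only [suffixWord, List.cons_append, List.nil_append, List.cons.injEq] at hB
      split at hB <;> omega
  · have hchain := isChain_suffixWord (b := b) hjs'
    rw [hB, List.concat_eq_append, List.isChain_append] at hchain
    exact ⟨A₂, L ++ [z], by simp, ⟨x - 1, hpred, by unfold dnAdj; omega⟩,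
      ⟨z, by simp, hchain.2.2 z (by simp) x (by simp) (by omega)⟩⟩

theorem homog_suffixWord {b : Bool} {js : List ℕ} (hsort : js.Pairwise (· < ·))
    (hjs : ∀ j ∈ js, 1 ≤ j ∧ j ≤ n - 1) : Homog (dnAdj n) (suffixWord n b js) := by
  induction js generalizing b with
  | nil => exact homog_of_nodup List.nodup_nil
  | cons j js ih =>
    have hj := hjs j (by simp)
    rw [suffixWord_cons, homog_append_iff]
    refine ⟨homog_of_nodup ?_, ih hsort.of_cons fun j' hj' => hjs j' (by simp [hj']),
      fun A₁ x A₂ B₁ B₂ hA hB => ?_⟩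
    · refine List.nodup_cons.2 ⟨fun h => ?_, (desc_pairwise _ _).nodup⟩
      have := mem_desc.1 h
      split at this <;> omega
    obtain ⟨rfl, hx⟩ | ⟨A₁', rfl, hD⟩ := List.cons_eq_append_iff.1 hA
    · obtain ⟨rfl, rfl⟩ := List.cons.inj hx.symm
      cases js with
      | nil => simp [suffixWord] at hB
      | cons j₂ js => exact twoNeighborsIn_of_segment_head hsort hjs hB
    · exact twoNeighborsIn_of_segment_interior hsort hjs hD hB

end SuffixWord

def commonStart (n k : ℕ) : List ℕ := n :: desc (n - 2) (k + 1) ++ [n - 1]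

lemma suffixWord_eq_commonStart_append (n k j₂ : ℕ) (js : List ℕ) :
    suffixWord n true ((k + 1) :: j₂ :: js) =
      commonStart n k ++ (desc (n - 2) j₂ ++ suffixWord n true js) := by
  simp [suffixWord, commonStart]

theorem homog_append_suffixWord_iff {n k : ℕ} {js p : List ℕ} (hjs : ValidSuffixIdx n js)
    (hhead : js.head? = some (k + 1)) (hlen : 2 ≤ js.length) (hp : ∀ x ∈ p, x ≤ n - 1) :
    Homog (dnAdj n) (p ++ suffixWord n true js) ↔ Homog (dnAdj n) (p ++ commonStart n k) := by
  obtain ⟨hchain, hbd⟩ := hjs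
  have hsort := List.isChain_iff_pairwise.1 hchain
  rcases js with _ | ⟨j, _ | ⟨j₂, js⟩⟩
  · simp at hlen
  · simp at hlen
  obtain rfl : j = k + 1 := by simpa using hhead
  have hS := suffixWord_eq_commonStart_append n k j₂ js
  rw [hS, ← List.append_assoc]
  refine homog_append_append_iff (hS ▸ homog_suffixWord hsort hbd) fun x hxp hxT => ?_
  obtain ⟨j', hj', hj'x⟩ := exists_le_of_mem_suffixWord (b := false) (js := j₂ :: js)
    (fun j hj => (hbd j (by simp [hj])).2) (List.mem_cons_of_mem _ hxT)
  have := List.rel_of_pairwise_cons hsort hj'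
  have := hp x hxp
  simp only [commonStart, List.cons_append, List.mem_cons, List.mem_append, mem_desc]
  omega

lemma le_of_mem_prefixWord {n : ℕ} {i : ℕ → ℕ} {x : ℕ} (hx : x ∈ prefixWord n i) :
    x ≤ n - 1 := by
  simp only [prefixWord, List.mem_flatMap, List.mem_range] at hx
  obtain ⟨t, ht, hx⟩ := hx
  have := (mem_desc.1 hx).2
  omega

theorem prefixSet_suffixWord {n k : ℕ} {js : List ℕ} (hjs : ValidSuffixIdx n js)
    (hhead : js.head? = some (k + 1)) (hlen : 2 ≤ js.length) :
    prefixSet n (suffixWord n true js) = prefixSet n (commonStart n k) := by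
  ext p
  refine exists_congr fun i => and_congr_right fun _ => and_congr_right fun hp => ?_
  subst hp
  exact homog_append_suffixWord_iff hjs hhead hlen fun _ => le_of_mem_prefixWord

lemma card_collection (n : ℕ) (suf : List ℕ) :
    Nat.card (collection n suf) = Nat.card (prefixSet n suf) := by
  have : collection n suf = (· ++ suf) '' prefixSet n suf := by
    ext w
    constructor
    · rintro ⟨i, hi, rfl, hh⟩
      exact ⟨prefixWord n i, ⟨i, hi, rfl, hh⟩, rfl⟩
    · rintro ⟨p, ⟨i, hi, rfl, hh⟩, rfl⟩
      exact ⟨i, hi, rfl, hh⟩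
  rw [this, Nat.card_image_of_injective fun _ _ => List.append_cancel_right]

theorem same_prefixes_general (n k : ℕ)
    (js js' : List ℕ) (hjs : ValidSuffixIdx n js) (hjs' : ValidSuffixIdx n js')
    (hhead : js.head? = some (k + 1)) (hhead' : js'.head? = some (k + 1))
    (hlen : 2 ≤ js.length) (hlen' : 2 ≤ js'.length) :
    prefixSet n (suffixWord n true js) = prefixSet n (suffixWord n true js') ∧
    Nat.card ↥(collection n (suffixWord n true js)) =
      Nat.card ↥(collection n (suffixWord n true js')) := by
  have h := prefixSet_suffixWord hjs hhead hlen
  have h' := prefixSet_suffixWord hjs' hhead' hlen'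
  exact ⟨h.trans h'.symm, by rw [card_collection, card_collection, h, h']⟩

/-- For `0 ≤ k ≤ n-3`, any two collections labeled by suffixes whose first segment descends
exactly to `k+1` and which have at least two segments have the same set of prefixes, and in
particular the same number of elements. -/
theorem same_prefixes (n k : ℕ) (hn : 4 ≤ n) (hk : k ≤ n - 3)
    (js js' : List ℕ) (hjs : ValidSuffixIdx n js) (hjs' : ValidSuffixIdx n js')
    (hhead : js.head? = some (k + 1)) (hhead' : js'.head? = some (k + 1))
    (hlen : 2 ≤ js.length) (hlen' : 2 ≤ js'.length) :
    prefixSet n (suffixWord n true js) = prefixSet n (suffixWord n true js') ∧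
    Nat.card ↥(collection n (suffixWord n true js)) =
      Nat.card ↥(collection n (suffixWord n true js')) :=
  same_prefixes_general n k js js' hjs hjs' hhead hhead' hlen hlen'
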